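/- Let x, y ∈ (0,1) be real numbers (viewed as points of 𝔻) such that ln(x/(1−x)) − ln(y/(1−y)) is irrational. Then liminf_{n→∞} |fⁿ(x) − fⁿ(y)| = 0. -/

import Mathlib

/-- The open unit disk in `ℂ`. -/
def unitDisk : Set ℂ := {z : ℂ | ‖z‖ < 1}

/-- The map `f` on the open unit disk. -/
noncomputable def mapF (z : ℂ) : ℂ :=
  if z = 0 then 0 else
    (Real.exp 1 * z / (Real.exp 1 * ‖z‖ - ‖z‖ + 1)) *
      Complex.exp (2 * Real.pi * Complex.I *
        Real.log (‖z‖ / (1 - ‖z‖)))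

/-- The map `F`, the inverse of `f`, on the open unit disk. -/
noncomputable def mapFinv (w : ℂ) : ℂ :=
  if w = 0 then 0 else
    ((Real.exp 1)⁻¹ * w / ((Real.exp 1)⁻¹ * ‖w‖ - ‖w‖ + 1)) *
      Complex.exp (-(2 * Real.pi * Complex.I *
        Real.log (‖w‖ / (1 - ‖w‖))))

/-!
In logit coordinates, writing a point of the disk as `sigmoid a * exp (θ * I)`, the map `f`
sends `(a, θ)` to `(a + 1, θ + 2π a)`. Hence after `n` steps the radii of the orbits of
`x = sigmoid a` and `y = sigmoid b` both tend to `1`, while their angles differ by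
`2π n (a - b)`. Since `a - b` is irrational, Dirichlet's approximation theorem makes
`n (a - b)` arbitrarily close to an integer for infinitely many `n`.
-/

open Complex Filter Set
open Real (sigmoid)
open scoped Real Topology

theorem Filter.liminf_eq_zero_of_frequently_lt {ι : Type*} {l : Filter ι} {u : ι → ℝ}
    (h_nonneg : ∀ i, 0 ≤ u i) (h_small : ∀ ε > 0, ∃ᶠ i in l, u i < ε) :
    liminf u l = 0 := by
  have h_le : ∀ ε > 0, ∃ᶠ i in l, u i ≤ ε := fun ε hε ↦ (h_small ε hε).mono fun _ ↦ le_of_lt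
  refine le_antisymm (le_of_forall_pos_le_add fun ε hε ↦ ?_) ?_
  · rw [zero_add]
    exact liminf_le_of_frequently_le (h_le ε hε) (isBoundedUnder_of ⟨0, h_nonneg⟩)
  · exact le_liminf_of_le (IsCoboundedUnder.of_frequently_le (h_le 1 one_pos))
      (.of_forall h_nonneg)

theorem AddCircle.frequently_norm_nsmul_lt {p : ℝ} [Fact (0 < p)] {ξ : AddCircle p}
    (hξ : ¬IsOfFinAddOrder ξ) {ε : ℝ} (hε : 0 < ε) :
    ∃ᶠ n : ℕ in atTop, ‖n • ξ‖ < ε := by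
  rw [frequently_atTop]
  intro N
  have h_pos : ∀ j ∈ Finset.Ico 1 N, 0 < ‖j • ξ‖ := fun j hj ↦
    norm_pos_iff.2 fun h ↦ hξ (isOfFinAddOrder_iff_nsmul_eq_zero.2 ⟨j, (Finset.mem_Ico.1 hj).1, h⟩)
  have h_lim : Tendsto (fun M : ℕ ↦ p / ↑(M + 1)) atTop (𝓝 0) :=
    (tendsto_const_div_atTop_nhds_zero_nat p).comp (tendsto_add_atTop_nat 1)
  obtain ⟨M, hM, h_small, h_lt⟩ := ((eventually_gt_atTop 0).and <|
    ((Finset.eventually_all _).2 fun j hj ↦ h_lim.eventually_lt_const (h_pos j hj)).and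
      (h_lim.eventually_lt_const hε)).exists
  -- `M` is chosen so large that Dirichlet's `j` cannot be one of `1, …, N - 1`
  obtain ⟨j, hj, hj_le⟩ := AddCircle.exists_norm_nsmul_le ξ hM
  refine ⟨j, not_lt.1 fun hjN ↦ ?_, hj_le.trans_lt h_lt⟩
  exact (hj_le.trans_lt (h_small j (Finset.mem_Ico.2 ⟨hj.1, hjN⟩))).false

theorem Real.sigmoid_div_one_sub_sigmoid (a : ℝ) : sigmoid a / (1 - sigmoid a) = Real.exp a := by
  rw [Real.sigmoid_def, Real.exp_neg]
  field_simp
  ring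

theorem Real.sigmoid_log_div_one_sub {x : ℝ} (hx : x ∈ Ioo 0 1) :
    sigmoid (Real.log (x / (1 - x))) = x := by
  obtain ⟨hx0, hx1⟩ := hx
  have hx1' : 0 < 1 - x := sub_pos.2 hx1
  rw [Real.sigmoid_def, Real.exp_neg, Real.exp_log (by positivity)]
  field_simp
  ring

theorem Real.sigmoid_add_one (a : ℝ) :
    sigmoid (a + 1) = Real.exp 1 * sigmoid a / (Real.exp 1 * sigmoid a - sigmoid a + 1) := by
  have hD : 0 < Real.exp 1 * sigmoid a - sigmoid a + 1 := by
    nlinarith [Real.sigmoid_pos a, Real.add_one_le_exp 1]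
  rw [eq_div_iff hD.ne']
  simp only [Real.sigmoid_def, Real.exp_neg, Real.exp_add]
  field_simp
  ring

theorem mapF_sigmoid_mul_exp (a θ : ℝ) :
    mapF (sigmoid a * cexp (θ * I)) = sigmoid (a + 1) * cexp ((θ + 2 * π * a : ℝ) * I) := by
  have h_norm : ‖(sigmoid a : ℂ) * cexp (θ * I)‖ = sigmoid a := by
    rw [norm_mul, norm_exp_ofReal_mul_I, mul_one, norm_real,
      Real.norm_of_nonneg (Real.sigmoid_nonneg a)]
  have h_ne : (sigmoid a : ℂ) * cexp (θ * I) ≠ 0 := by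
    rw [← norm_ne_zero_iff, h_norm]
    exact (Real.sigmoid_pos a).ne'
  rw [mapF, if_neg h_ne, h_norm, Real.sigmoid_div_one_sub_sigmoid, Real.log_exp,
    Real.sigmoid_add_one]
  push_cast
  rw [add_mul, Complex.exp_add]
  ring_nf

theorem iterate_mapF_sigmoid_mul_exp (a θ : ℝ) (n : ℕ) :
    mapF^[n] (sigmoid a * cexp (θ * I)) =
      sigmoid (a + n) * cexp ((θ + 2 * π * (n * a + n * (n - 1) / 2) : ℝ) * I) := by
  induction n with
  | zero => simp
  | succ n ih =>
    rw [Function.iterate_succ_apply', ih, mapF_sigmoid_mul_exp]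
    push_cast
    ring_nf

theorem norm_ofReal_mul_exp_sub_le {r s : ℝ} (α β : ℝ) (hs : |s| ≤ 1) :
    ‖(r : ℂ) * cexp (α * I) - s * cexp (β * I)‖ ≤ |r - s| + ‖cexp ((α - β : ℝ) * I) - 1‖ := by
  have h_split : (r : ℂ) * cexp (α * I) - s * cexp (β * I) =
      (r - s : ℝ) * cexp (α * I) + s * cexp (β * I) * (cexp ((α - β : ℝ) * I) - 1) := by
    push_cast
    rw [sub_mul (α : ℂ), Complex.exp_sub]
    field_simp
    ring
  calc ‖(r : ℂ) * cexp (α * I) - s * cexp (β * I)‖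
      ≤ |r - s| + |s| * ‖cexp ((α - β : ℝ) * I) - 1‖ := by
        rw [h_split]
        refine (norm_add_le _ _).trans_eq ?_
        simp only [norm_mul, norm_exp_ofReal_mul_I, norm_real, Real.norm_eq_abs, mul_one]
    _ ≤ |r - s| + ‖cexp ((α - β : ℝ) * I) - 1‖ := by
        gcongr
        exact mul_le_of_le_one_left (norm_nonneg _) hs

theorem norm_exp_two_pi_mul_I_sub_one_le (t : ℝ) :
    ‖cexp ((2 * π * t : ℝ) * I) - 1‖ ≤ 2 * π * ‖(t : UnitAddCircle)‖ := by
  have h_period : cexp ((2 * π * t : ℝ) * I) = cexp (I * (2 * π * (t - round t) : ℝ)) := by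
    rw [Complex.exp_eq_exp_iff_exists_int]
    exact ⟨round t, by push_cast; ring⟩
  rw [h_period, UnitAddCircle.norm_eq]
  refine Real.norm_exp_I_mul_ofReal_sub_one_le.trans_eq ?_
  rw [Real.norm_eq_abs, abs_mul, abs_of_pos Real.two_pi_pos]

theorem norm_iterate_mapF_sigmoid_sub_le (a b : ℝ) (n : ℕ) :
    ‖mapF^[n] (sigmoid a : ℂ) - mapF^[n] (sigmoid b : ℂ)‖ ≤
      |sigmoid (a + n) - sigmoid (b + n)| + 2 * π * ‖n • ((a - b : ℝ) : UnitAddCircle)‖ := by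
  have h_iter (c : ℝ) : mapF^[n] (sigmoid c : ℂ) =
      sigmoid (c + n) * cexp ((2 * π * (n * c + n * (n - 1) / 2) : ℝ) * I) := by
    simpa using iterate_mapF_sigmoid_mul_exp c 0 n
  rw [h_iter, h_iter, ← AddCircle.coe_nsmul, nsmul_eq_mul]
  refine (norm_ofReal_mul_exp_sub_le _ _ ?_).trans ?_
  · rw [abs_of_pos (Real.sigmoid_pos _)]
    exact Real.sigmoid_le_one _
  · have h_phase : 2 * π * (n * a + n * (n - 1) / 2) - 2 * π * (n * b + n * (n - 1) / 2) =
        2 * π * (n * (a - b)) := by ring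
    rw [h_phase]
    gcongr
    exact norm_exp_two_pi_mul_I_sub_one_le _

/-- For `x, y ∈ (0,1)` with `ln(x/(1-x)) - ln(y/(1-y))` irrational, the distances between the
iterates of `f` at `x` and `y` have zero liminf. -/
theorem stmt_16 (x y : ℝ) (hx : x ∈ Set.Ioo (0 : ℝ) 1) (hy : y ∈ Set.Ioo (0 : ℝ) 1)
    (hirr : Irrational (Real.log (x / (1 - x)) - Real.log (y / (1 - y)))) :
    Filter.liminf (fun n : ℕ => ‖mapF^[n] (x : ℂ) - mapF^[n] (y : ℂ)‖)
      Filter.atTop = 0 := by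
  rw [← Real.sigmoid_log_div_one_sub hx, ← Real.sigmoid_log_div_one_sub hy]
  set a := Real.log (x / (1 - x))
  set b := Real.log (y / (1 - y))
  refine liminf_eq_zero_of_frequently_lt (fun n ↦ norm_nonneg _) fun ε hε ↦ ?_
  have h_radius : ∀ᶠ n : ℕ in atTop, |sigmoid (a + n) - sigmoid (b + n)| < ε / 2 := by
    have h_lim (c : ℝ) : Tendsto (fun n : ℕ ↦ sigmoid (c + n)) atTop (𝓝 1) :=
      Real.tendsto_sigmoid_atTop.comp
        (tendsto_atTop_add_const_left _ c tendsto_natCast_atTop_atTop)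
    have h_dist := (h_lim a).dist (h_lim b)
    rw [dist_self] at h_dist
    simpa only [Real.dist_eq] using h_dist.eventually_lt_const (half_pos hε)
  have h_irrational : ¬IsOfFinAddOrder ((a - b : ℝ) : UnitAddCircle) := fun h ↦ by
    obtain ⟨q, hq⟩ := AddCircle.isOfFinAddOrder_iff_exists_rat_eq_div.1 h
    exact hirr ⟨q, by simpa using hq⟩
  have h_angle := AddCircle.frequently_norm_nsmul_lt h_irrational
    (div_pos hε (by positivity : (0 : ℝ) < 4 * π))
  refine (h_angle.and_eventually h_radius).mono fun n ⟨h_angle_n, h_radius_n⟩ ↦ ?_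
  calc _ ≤ _ := norm_iterate_mapF_sigmoid_sub_le a b n
    _ < ε / 2 + 2 * π * (ε / (4 * π)) := by gcongr
    _ = ε := by field_simp; ring
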